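/- arXiv:1502.00532 — 3 statements merged into one kernel-verified Lean document; each statement's English description precedes it below -/
import Mathlib

section
/- For every α ∈ (0,1), the sequence N^{1−α} · ( (1/|Λ_N|) Σ_{j ∈ Λ_N} Ψ(x_0, x_j) − 2^{α}/(1−α) ) converges as N → ∞ to a nonzero constant χ(α) = 2^{α} C(α), where C(α) = −1/(1−α) + 1/2 − ∫_0^1 (u − 1/2) Σ_{k=1}^{∞} α/(u+k)^{α+1} du. -/
open Filter MeasureTheory intervalIntegral

/-- The lattice point x_j = j/(2N) on the circle S = ℝ/ℤ. -/
noncomputable def latticePt (N : ℕ) (j : ℤ) : UnitAddCircle :=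
  (((j : ℝ) / (2 * N) : ℝ) : UnitAddCircle)

/-- The constant C(α) = -1/(1-α) + 1/2 - ∫_0^1 (u - 1/2) Σ_{k≥1} α/(u+k)^{α+1} du. -/
noncomputable def Cconst (α : ℝ) : ℝ :=
  -1 / (1 - α) + 1 / 2
    - ∫ u in (0:ℝ)..1, (u - 1 / 2) * ∑' k : ℕ, α / (u + ((k:ℝ) + 1)) ^ (α + 1)

/-- Closed form for the basic Euler–Maclaurin block. -/
noncomputable def bcl (α c : ℝ) : ℝ :=
  ((c+1) ^ (1-α) - c ^ (1-α)) / (1-α) - (c ^ (-α) + (c+1) ^ (-α)) / 2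

lemma bval {α : ℝ} (h0 : 0 < α) (h1 : α < 1) (c : ℝ) (hc : 1 ≤ c) :
    ∫ u in (0:ℝ)..1, (u - 1/2) * (α / (u + c) ^ (α + 1)) = bcl α c := by
  have h1α : (1:ℝ) - α ≠ 0 := by linarith
  have hpos : ∀ u ∈ Set.uIcc (0:ℝ) 1, 0 < u + c := by
    intro u hu
    rw [Set.uIcc_of_le (by norm_num)] at hu
    nlinarith [hu.1]
  have hderiv : ∀ u ∈ Set.uIcc (0:ℝ) 1,
      HasDerivAt (fun u : ℝ => -(u - 1/2) * (u + c) ^ (-α) + (u + c) ^ (1-α) / (1-α))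
        ((u - 1/2) * (α / (u + c) ^ (α + 1))) u := by
    intro u hu
    have hu0 : 0 < u + c := hpos u hu
    have hb : HasDerivAt (fun u : ℝ => u + c) 1 u := (hasDerivAt_id u).add_const c
    have h2 : HasDerivAt (fun u : ℝ => (u + c) ^ (-α)) (1 * (-α) * (u + c) ^ (-α - 1)) u :=
      hb.rpow_const (Or.inl hu0.ne')
    have h3 : HasDerivAt (fun u : ℝ => -(u - 1/2)) (-1) u := by
      exact (((hasDerivAt_id u).sub_const (1/2)).neg)
    have h4 := h3.mul h2
    have h5 : HasDerivAt (fun u : ℝ => (u + c) ^ (1-α) / (1-α))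
        (1 * (1-α) * (u + c) ^ (1-α-1) / (1-α)) u := (hb.rpow_const (Or.inl hu0.ne')).div_const _
    convert h4.add h5 using 1
    case e'_4 => rfl
    case e'_5 => rfl
    case e'_8 => rfl
    have e1 : (u + c) ^ ((1:ℝ)-α-1) = (u + c) ^ (-α) := by norm_num
    have e2 : (u + c) ^ (-α - 1) = ((u + c) ^ (α+1))⁻¹ := by
      rw [show (-α-1:ℝ) = -(α+1) by ring, Real.rpow_neg hu0.le]
    have hne := (Real.rpow_pos_of_pos hu0 (α+1)).ne'
    rw [e1, e2]
    field_simp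
    ring
  have hint : IntervalIntegrable (fun u : ℝ => (u - 1/2) * (α / (u + c) ^ (α + 1))) volume 0 1 := by
    apply ContinuousOn.intervalIntegrable
    apply ContinuousOn.mul (by fun_prop)
    apply ContinuousOn.div continuousOn_const
    · exact (continuousOn_id.add continuousOn_const).rpow_const
        (fun u hu => Or.inl (hpos u hu).ne')
    · intro u hu
      exact (Real.rpow_pos_of_pos (hpos u hu) _).ne'
  rw [intervalIntegral.integral_eq_sub_of_hasDerivAt hderiv hint]
  have hc1 : (0:ℝ) < c := lt_of_lt_of_le one_pos hc
  unfold bcl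
  norm_num
  rw [add_comm (1:ℝ) c]
  field_simp
  ring

lemma stepIneq {α : ℝ} (h0 : 0 < α) (x : ℝ) (hx : 1 ≤ x) :
    α / (x+1) ^ (α+1) ≤ x ^ (-α) - (x+1) ^ (-α) := by
  have hx0 : (0:ℝ) < x := lt_of_lt_of_le one_pos hx
  have hx1 : (0:ℝ) < x + 1 := by linarith
  have hderiv : ∀ t ∈ Set.uIcc x (x+1),
      HasDerivAt (fun t : ℝ => -(t ^ (-α))) (α / t ^ (α+1)) t := by
    intro t ht
    rw [Set.uIcc_of_le (by linarith)] at ht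
    have ht0 : 0 < t := lt_of_lt_of_le hx0 ht.1
    have h2 : HasDerivAt (fun t : ℝ => t ^ (-α)) (1 * (-α) * t ^ (-α - 1)) t :=
      (hasDerivAt_id t).rpow_const (Or.inl ht0.ne')
    convert h2.neg using 1
    case e'_4 => rfl
    case e'_5 => rfl
    case e'_8 => rfl
    rw [show (-α-1:ℝ) = -(α+1) by ring, Real.rpow_neg ht0.le]
    field_simp
  have hint : IntervalIntegrable (fun t : ℝ => α / t ^ (α+1)) volume x (x+1) := by
    apply ContinuousOn.intervalIntegrable
    apply ContinuousOn.div continuousOn_const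
    · apply ContinuousOn.rpow_const continuousOn_id
      intro t ht
      rw [Set.uIcc_of_le (by linarith)] at ht
      exact Or.inl (by nlinarith [ht.1] : t ≠ 0)
    · intro t ht
      rw [Set.uIcc_of_le (by linarith)] at ht
      exact (Real.rpow_pos_of_pos (by linarith [ht.1]) _).ne'
  have hftc := intervalIntegral.integral_eq_sub_of_hasDerivAt hderiv hint
  have hmono : α / (x+1) ^ (α+1) ≤ ∫ t in x..(x+1), α / t ^ (α+1) := by
    have he : α / (x+1) ^ (α+1) = ∫ _ in x..(x+1), α / (x+1) ^ (α+1) := by simp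
    rw [he]
    apply intervalIntegral.integral_mono_on (by linarith)
      (intervalIntegrable_const) hint
    intro t ht
    have ht0 : 0 < t := lt_of_lt_of_le hx0 ht.1
    apply div_le_div_of_nonneg_left h0.le (Real.rpow_pos_of_pos ht0 _)
    exact Real.rpow_le_rpow ht0.le ht.2 (by linarith)
  calc α / (x+1) ^ (α+1) ≤ ∫ t in x..(x+1), α / t ^ (α+1) := hmono
    _ = x ^ (-α) - (x+1) ^ (-α) := by rw [hftc]; ring

lemma qPartial {α : ℝ} (h0 : 0 < α) (n : ℕ) :
    ∑ k ∈ Finset.range n, α / ((k:ℝ)+1) ^ (α+1) ≤ α + 1 := by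
  have key : ∀ n : ℕ, 1 ≤ n →
      ∑ k ∈ Finset.range n, α / ((k:ℝ)+1) ^ (α+1) ≤ α + 1 - ((n:ℝ)) ^ (-α) := by
    intro n hn
    induction n, hn using Nat.le_induction with
    | base => simp [Real.one_rpow]
    | succ n hn ih =>
      rw [Finset.sum_range_succ]
      have hstep := stepIneq h0 (n:ℝ) (by exact_mod_cast hn)
      push_cast
      nlinarith [hstep, ih]
  rcases Nat.eq_zero_or_pos n with h | h
  · simp [h]; positivity
  · have h2 : (0:ℝ) < ((n:ℝ)) ^ (-α) := Real.rpow_pos_of_pos (by exact_mod_cast h) _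
    linarith [key n h]

lemma qSummable {α : ℝ} (h0 : 0 < α) :
    Summable (fun k : ℕ => α / ((k:ℝ)+1) ^ (α+1)) := by
  apply summable_of_sum_range_le (c := α + 1) (fun k => by positivity)
  exact fun n => qPartial h0 n

lemma qTsum {α : ℝ} (h0 : 0 < α) :
    ∑' k : ℕ, α / ((k:ℝ)+1) ^ (α+1) ≤ α + 1 :=
  Real.tsum_le_of_sum_range_le (fun k => by positivity) (fun n => qPartial h0 n)

lemma FintOn {α : ℝ} (k : ℕ) :
    IntegrableOn (fun u : ℝ => (u - 1/2) * (α / (u + ((k:ℝ)+1)) ^ (α+1)))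
      (Set.Ioc 0 1) volume := by
  apply (ContinuousOn.integrableOn_Icc ?_).mono_set Set.Ioc_subset_Icc_self
  apply ContinuousOn.mul (by fun_prop)
  apply ContinuousOn.div continuousOn_const
  · apply ContinuousOn.rpow_const (by fun_prop)
    intro u hu
    have : (0:ℝ) < u + ((k:ℝ)+1) := by
      have := hu.1; positivity
    exact Or.inl this.ne'
  · intro u hu
    have hpos : (0:ℝ) < u + ((k:ℝ)+1) := by have := hu.1; positivity
    exact (Real.rpow_pos_of_pos hpos _).ne'

lemma FnormBound {α : ℝ} (h0 : 0 < α) (k : ℕ) :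
    ∫ u in Set.Ioc (0:ℝ) 1, ‖(u - 1/2) * (α / (u + ((k:ℝ)+1)) ^ (α+1))‖
      ≤ (1/2) * (α / ((k:ℝ)+1) ^ (α+1)) := by
  have hk1 : (0:ℝ) < (k:ℝ)+1 := by positivity
  have hbd : ∀ u ∈ Set.Ioc (0:ℝ) 1,
      ‖(u - 1/2) * (α / (u + ((k:ℝ)+1)) ^ (α+1))‖ ≤ (1/2) * (α / ((k:ℝ)+1) ^ (α+1)) := by
    intro u hu
    rw [norm_mul]
    have hpos : (0:ℝ) < u + ((k:ℝ)+1) := by have := hu.1; positivity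
    have h1 : ‖u - 1/2‖ ≤ 1/2 := by
      rw [Real.norm_eq_abs, abs_le]
      constructor <;> [linarith [hu.1]; linarith [hu.2]]
    have h2 : ‖α / (u + ((k:ℝ)+1)) ^ (α+1)‖ ≤ α / ((k:ℝ)+1) ^ (α+1) := by
      rw [Real.norm_eq_abs, abs_of_nonneg (by positivity)]
      apply div_le_div_of_nonneg_left h0.le (Real.rpow_pos_of_pos hk1 _)
      exact Real.rpow_le_rpow hk1.le (by linarith [hu.1]) (by linarith)
    exact mul_le_mul h1 h2 (norm_nonneg _) (by norm_num)
  calc ∫ u in Set.Ioc (0:ℝ) 1, ‖(u - 1/2) * (α / (u + ((k:ℝ)+1)) ^ (α+1))‖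
      ≤ ∫ _ in Set.Ioc (0:ℝ) 1, (1/2) * (α / ((k:ℝ)+1) ^ (α+1)) := by
        apply integral_mono_of_nonneg
        · exact Filter.Eventually.of_forall (fun u => norm_nonneg _)
        · exact integrableOn_const (hs := by simp)
        · rw [EventuallyLE, ae_restrict_iff' measurableSet_Ioc]
          exact Filter.Eventually.of_forall hbd
    _ = (1/2) * (α / ((k:ℝ)+1) ^ (α+1)) := by simp [Real.volume_Ioc]

lemma bclEqInt {α : ℝ} (h0 : 0 < α) (h1 : α < 1) (k : ℕ) :
    bcl α ((k:ℝ)+1)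
      = ∫ u in Set.Ioc (0:ℝ) 1, (u - 1/2) * (α / (u + ((k:ℝ)+1)) ^ (α+1)) := by
  rw [← intervalIntegral.integral_of_le zero_le_one,
    bval h0 h1 ((k:ℝ)+1) (by have : (0:ℝ) ≤ k := Nat.cast_nonneg k; linarith)]

lemma hasSumI {α : ℝ} (h0 : 0 < α) (h1 : α < 1) :
    HasSum (fun k : ℕ => bcl α ((k:ℝ)+1))
      (∫ u in (0:ℝ)..1, (u - 1 / 2) * ∑' k : ℕ, α / (u + ((k:ℝ) + 1)) ^ (α + 1)) := by
  have hrw : (∫ u in (0:ℝ)..1, (u - 1/2) * ∑' k : ℕ, α / (u + ((k:ℝ)+1)) ^ (α+1))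
      = ∫ u in Set.Ioc (0:ℝ) 1, ∑' k : ℕ, (u - 1/2) * (α / (u + ((k:ℝ)+1)) ^ (α+1)) := by
    rw [intervalIntegral.integral_of_le zero_le_one]
    congr 1
    ext u
    rw [tsum_mul_left]
  rw [hrw]
  have hsum : Summable (fun k : ℕ => ∫ u in Set.Ioc (0:ℝ) 1,
      ‖(u - 1/2) * (α / (u + ((k:ℝ)+1)) ^ (α+1))‖) := by
    apply Summable.of_nonneg_of_le
      (fun k => integral_nonneg (fun u => norm_nonneg _))
      (fun k => FnormBound h0 k)
    exact (qSummable h0).mul_left _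
  have h := hasSum_integral_of_summable_integral_norm (μ := volume.restrict (Set.Ioc (0:ℝ) 1))
      (fun k => FintOn k) hsum
  convert h using 2 with k
  case e'_3 => rfl
  exact bclEqInt h0 h1 k

lemma sumIdentity {α : ℝ} (h0 : 0 < α) (h1 : α < 1) (N : ℕ) (hN : 1 ≤ N) :
    (∑ k ∈ Finset.range N, ((k:ℝ)+1) ^ (-α)) - (N:ℝ) ^ (1-α) / (1-α)
      = -1/(1-α) + 1/2 + (N:ℝ) ^ (-α) / 2 - ∑ k ∈ Finset.range (N-1), bcl α ((k:ℝ)+1) := by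
  have h1α : (1:ℝ) - α ≠ 0 := by linarith
  induction N, hN using Nat.le_induction with
  | base =>
    norm_num [Real.one_rpow]
    field_simp
    ring
  | succ n hn ih =>
    rw [Finset.sum_range_succ, show (n+1)-1 = (n-1)+1 by omega, Finset.sum_range_succ]
    have hcast : ((n - 1 : ℕ) : ℝ) = (n:ℝ) - 1 := by
      rw [Nat.cast_sub hn]; norm_num
    rw [hcast, show ((n:ℝ) - 1 + 1) = (n:ℝ) by ring]
    push_cast
    have hb : bcl α (n:ℝ) = (((n:ℝ)+1) ^ (1-α) - (n:ℝ) ^ (1-α)) / (1-α)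
        - ((n:ℝ) ^ (-α) + ((n:ℝ)+1) ^ (-α)) / 2 := rfl
    linear_combination ih + hb

lemma SLim {α : ℝ} (h0 : 0 < α) (h1 : α < 1) :
    Tendsto (fun N : ℕ => (∑ k ∈ Finset.range N, ((k:ℝ)+1) ^ (-α)) - (N:ℝ) ^ (1-α) / (1-α))
      atTop (nhds (Cconst α)) := by
  have T1 : Tendsto (fun N : ℕ => ((N:ℝ)) ^ (-α)) atTop (nhds 0) :=
    (tendsto_rpow_neg_atTop h0).comp tendsto_natCast_atTop_atTop
  have T2 : Tendsto (fun N : ℕ => ∑ k ∈ Finset.range (N-1), bcl α ((k:ℝ)+1)) atTop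
      (nhds (∫ u in (0:ℝ)..1, (u - 1 / 2) * ∑' k : ℕ, α / (u + ((k:ℝ) + 1)) ^ (α + 1))) :=
    ((hasSumI h0 h1).tendsto_sum_nat).comp (tendsto_sub_atTop_nat 1)
  have T3 := ((T1.div_const 2).const_add (-1/(1-α) + 1/2)).sub T2
  apply Tendsto.congr' _ (by convert T3 using 2; unfold Cconst; ring)
  filter_upwards [eventually_ge_atTop 1] with N hN
  exact (sumIdentity h0 h1 N hN).symm

lemma distEq (N : ℕ) (hN : 1 ≤ N) (j : ℤ) (hj1 : -(N:ℤ) ≤ j) (hj2 : j ≤ (N:ℤ)) :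
    dist (latticePt N 0) (latticePt N j) = |(j:ℝ)| / (2 * N) := by
  have hN0 : (0:ℝ) < N := by exact_mod_cast hN
  have habs : |(j:ℝ) / (2 * N)| ≤ |(1:ℝ)| / 2 := by
    rw [abs_div, abs_of_pos (by linarith : (0:ℝ) < 2*N), abs_one]
    rw [div_le_div_iff₀ (by linarith) (by norm_num)]
    have : |(j:ℝ)| ≤ N := by
      rw [abs_le]
      constructor <;> [exact_mod_cast hj1; exact_mod_cast hj2]
    linarith
  have h0 : latticePt N 0 = 0 := by
    unfold latticePt
    norm_num
  rw [h0, dist_zero_left]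
  unfold latticePt
  rw [(AddCircle.norm_coe_eq_abs_iff (p := 1) (by norm_num)).2 habs, abs_div,
    abs_of_pos (by linarith : (0:ℝ) < 2*N)]

lemma sumNeg (N : ℕ) {α : ℝ} :
    ∑ j ∈ Finset.Ico (-(N:ℤ)) 0, |(j:ℝ)| ^ (-α)
      = ∑ k ∈ Finset.range N, ((k:ℝ)+1) ^ (-α) := by
  refine Finset.sum_nbij' (fun j => (-j-1).toNat) (fun k => -(k:ℤ)-1) ?_ ?_ ?_ ?_ ?_
  · intro j hj
    simp only [Finset.mem_Ico] at hj
    simp only [Finset.mem_range]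
    omega
  · intro k hk
    simp only [Finset.mem_range] at hk
    simp only [Finset.mem_Ico]
    omega
  · intro j hj
    simp only [Finset.mem_Ico] at hj
    beta_reduce
    omega
  · intro k hk
    simp only [Finset.mem_range] at hk
    beta_reduce
    omega
  · intro j hj
    simp only [Finset.mem_Ico] at hj
    congr 1
    have h : ((-j-1).toNat : ℤ) = -j-1 := Int.toNat_of_nonneg (by omega)
    have hc : (((-j-1).toNat : ℕ) : ℝ) = -(j:ℝ) - 1 := by
      exact_mod_cast congrArg (fun z : ℤ => (z:ℝ)) h
    rw [hc, abs_of_neg (by exact_mod_cast hj.2 : (j:ℝ) < 0)]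
    ring

lemma sumPos (N : ℕ) (hN : 1 ≤ N) {α : ℝ} :
    ∑ j ∈ Finset.Ico (1:ℤ) (N:ℤ), |(j:ℝ)| ^ (-α)
      = ∑ k ∈ Finset.range (N-1), ((k:ℝ)+1) ^ (-α) := by
  refine Finset.sum_nbij' (fun j => (j-1).toNat) (fun k => (k:ℤ)+1) ?_ ?_ ?_ ?_ ?_
  · intro j hj
    simp only [Finset.mem_Ico] at hj
    simp only [Finset.mem_range]
    omega
  · intro k hk
    simp only [Finset.mem_range] at hk
    simp only [Finset.mem_Ico]
    omega
  · intro j hj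
    simp only [Finset.mem_Ico] at hj
    beta_reduce
    omega
  · intro k hk
    simp only [Finset.mem_range] at hk
    beta_reduce
    omega
  · intro j hj
    simp only [Finset.mem_Ico] at hj
    congr 1
    have h : ((j-1).toNat : ℤ) = j-1 := Int.toNat_of_nonneg (by omega)
    have hc : (((j-1).toNat : ℕ) : ℝ) = (j:ℝ) - 1 := by
      exact_mod_cast congrArg (fun z : ℤ => (z:ℝ)) h
    rw [hc, abs_of_pos (by exact_mod_cast hj.1 : (0:ℝ) < (j:ℝ))]
    ring

lemma setSplit (N : ℕ) :
    (Finset.Ico (-(N:ℤ)) (N:ℤ)).erase 0 =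
      Finset.Ico (-(N:ℤ)) 0 ∪ Finset.Ico (1:ℤ) (N:ℤ) := by
  ext j
  simp only [Finset.mem_erase, Finset.mem_Ico, Finset.mem_union]
  omega

lemma sumEq {α : ℝ} (N : ℕ) (hN : 1 ≤ N) :
    ∑ j ∈ (Finset.Ico (-(N:ℤ)) (N:ℤ)).erase 0,
        dist (latticePt N 0) (latticePt N j) ^ (-α)
      = (2*(N:ℝ)) ^ α *
          (2 * (∑ k ∈ Finset.range N, ((k:ℝ)+1) ^ (-α)) - (N:ℝ) ^ (-α)) := by
  have hN0 : (0:ℝ) < N := by exact_mod_cast hN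
  have step1 : ∑ j ∈ (Finset.Ico (-(N:ℤ)) (N:ℤ)).erase 0,
      dist (latticePt N 0) (latticePt N j) ^ (-α)
      = ∑ j ∈ (Finset.Ico (-(N:ℤ)) (N:ℤ)).erase 0, (2*(N:ℝ)) ^ α * |(j:ℝ)| ^ (-α) := by
    apply Finset.sum_congr rfl
    intro j hj
    simp only [Finset.mem_erase, Finset.mem_Ico] at hj
    rw [distEq N hN j hj.2.1 (le_of_lt hj.2.2)]
    rw [Real.div_rpow (abs_nonneg _) (by linarith : (0:ℝ) ≤ 2*N),
      Real.rpow_neg (by linarith : (0:ℝ) ≤ 2*N), div_inv_eq_mul, mul_comm]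
  rw [step1, ← Finset.mul_sum]
  congr 1
  rw [setSplit N, Finset.sum_union (by
    rw [Finset.disjoint_left]
    intro a ha hb
    simp only [Finset.mem_Ico] at ha hb
    omega), sumNeg N, sumPos N hN]
  have hsplit : ∑ k ∈ Finset.range N, ((k:ℝ)+1) ^ (-α)
      = (∑ k ∈ Finset.range (N-1), ((k:ℝ)+1) ^ (-α)) + (N:ℝ) ^ (-α) := by
    conv_lhs => rw [show N = (N-1)+1 by omega]
    rw [Finset.sum_range_succ]
    congr 2
    rw [Nat.cast_sub hN]
    push_cast
    ring
  rw [hsplit]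
  ring

lemma keyAlg {α : ℝ} (h1 : α < 1) (N : ℕ) (hN : 1 ≤ N) (S : ℝ) :
    (N:ℝ) ^ (1-α) * ((1 / (2*(N:ℝ))) * ((2*(N:ℝ)) ^ α * (2*S - (N:ℝ) ^ (-α)))
        - (2:ℝ) ^ α / (1-α))
      = (2:ℝ) ^ α * (S - (N:ℝ) ^ (1-α) / (1-α)) - (2:ℝ) ^ (α-1) * (N:ℝ) ^ (-α) := by
  have hN0 : (0:ℝ) < N := by exact_mod_cast hN
  have ht0 : (0:ℝ) < (N:ℝ) ^ (-α) := Real.rpow_pos_of_pos hN0 _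
  have e1 : (2*(N:ℝ)) ^ α = 2 ^ α * (N:ℝ) ^ α := Real.mul_rpow (by norm_num) hN0.le
  have e2 : (N:ℝ) ^ α = ((N:ℝ) ^ (-α))⁻¹ := by
    rw [Real.rpow_neg hN0.le, inv_inv]
  have e3 : (N:ℝ) ^ (1-α) = N * (N:ℝ) ^ (-α) := by
    rw [show (1-α:ℝ) = 1 + (-α) by ring, Real.rpow_add hN0, Real.rpow_one]
  have e4 : (2:ℝ) ^ α = 2 ^ (α-1) * 2 := by
    rw [← Real.rpow_add_one (by norm_num : (2:ℝ) ≠ 0) (α-1)]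
    norm_num
  rw [e1, e2, e3, e4]
  have h1α : (1:ℝ) - α ≠ 0 := by linarith
  field_simp
  ring

lemma CconstNeg {α : ℝ} (h0 : 0 < α) (h1 : α < 1) : Cconst α < 0 := by
  have hS := hasSumI h0 h1
  have hb : ∀ k : ℕ, ‖bcl α ((k:ℝ)+1)‖ ≤ (1/2) * (α / ((k:ℝ)+1) ^ (α+1)) := by
    intro k
    rw [bclEqInt h0 h1 k]
    calc ‖∫ u in Set.Ioc (0:ℝ) 1, (u - 1/2) * (α / (u + ((k:ℝ)+1)) ^ (α+1))‖
        ≤ ∫ u in Set.Ioc (0:ℝ) 1, ‖(u - 1/2) * (α / (u + ((k:ℝ)+1)) ^ (α+1))‖ :=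
          MeasureTheory.norm_integral_le_integral_norm _
      _ ≤ (1/2) * (α / ((k:ℝ)+1) ^ (α+1)) := FnormBound h0 k
  have hsum2 : Summable (fun k : ℕ => (1/2) * (α / ((k:ℝ)+1) ^ (α+1))) :=
    (qSummable h0).mul_left _
  have hsumb : Summable (fun k : ℕ => ‖bcl α ((k:ℝ)+1)‖) :=
    Summable.of_nonneg_of_le (fun k => norm_nonneg _) hb hsum2
  have habs : ‖∫ u in (0:ℝ)..1, (u - 1 / 2) * ∑' k : ℕ, α / (u + ((k:ℝ) + 1)) ^ (α + 1)‖
      ≤ (α+1)/2 := by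
    rw [← hS.tsum_eq]
    calc ‖∑' k : ℕ, bcl α ((k:ℝ)+1)‖ ≤ ∑' k : ℕ, ‖bcl α ((k:ℝ)+1)‖ :=
          norm_tsum_le_tsum_norm hsumb
      _ ≤ ∑' k : ℕ, (1/2) * (α / ((k:ℝ)+1) ^ (α+1)) := Summable.tsum_le_tsum hb hsumb hsum2
      _ = (1/2) * ∑' k : ℕ, α / ((k:ℝ)+1) ^ (α+1) := tsum_mul_left
      _ ≤ (1/2) * (α + 1) := by nlinarith [qTsum h0]
      _ = (α+1)/2 := by ring
  have h1α : (0:ℝ) < 1 - α := by linarith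
  rw [Real.norm_eq_abs, abs_le] at habs
  have hkey : 1 + α/2 < 1/(1-α) := by
    rw [lt_div_iff₀ h1α]
    nlinarith
  unfold Cconst
  have hr : -1/(1-α) = -(1/(1-α)) := by ring
  rw [hr]
  linarith [habs.1, habs.2]

/-- For α ∈ (0,1), the sequence
N^{1-α} ((1/|Λ_N|) Σ_j Ψ(x_0, x_j) − 2^α/(1-α)) converges as N → ∞ to the
nonzero constant χ(α) = 2^α C(α). -/
theorem stmt7 (α : ℝ) (h0 : 0 < α) (h1 : α < 1) :
    Tendsto (fun N : ℕ =>
        (N:ℝ) ^ (1 - α) *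
          ((1 / (2 * (N:ℝ))) * ∑ j ∈ (Finset.Ico (-(N:ℤ)) (N:ℤ)).erase 0,
              dist (latticePt N 0) (latticePt N j) ^ (-α)
            - (2:ℝ) ^ α / (1 - α)))
      atTop (nhds ((2:ℝ) ^ α * Cconst α)) ∧ (2:ℝ) ^ α * Cconst α ≠ 0 := by
  constructor
  · have T1 : Tendsto (fun N : ℕ => ((N:ℝ)) ^ (-α)) atTop (nhds 0) :=
      (tendsto_rpow_neg_atTop h0).comp tendsto_natCast_atTop_atTop
    have T2 := ((SLim h0 h1).const_mul ((2:ℝ)^α)).sub (T1.const_mul ((2:ℝ)^(α-1)))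
    rw [mul_zero, sub_zero] at T2
    apply Tendsto.congr' _ T2
    filter_upwards [eventually_ge_atTop 1] with N hN
    rw [sumEq N hN, keyAlg h1 N hN _]
  · have h2 : (0:ℝ) < (2:ℝ)^α := Real.rpow_pos_of_pos (by norm_num) _
    exact (mul_neg_of_pos_of_neg h2 (CconstNeg h0 h1)).ne
end

section
/- For every α ∈ (0,1) the constant C(α) = −1/(1−α) + 1/2 − ∫_0^1 (u − 1/2) Σ_{k=1}^{∞} α/(u+k)^{α+1} du is nonzero (indeed strictly negative). -/
open Real Set

lemma aux_summable {α : ℝ} (h0 : 0 < α) :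
    Summable (fun k : ℕ => α / ((k:ℝ) + 1) ^ (α + 1)) := by
  have h : Summable (fun k : ℕ => 1 / ((k:ℝ) + 1) ^ (α + 1)) := by
    have h1 := (Real.summable_one_div_nat_rpow (p := α + 1)).mpr (by linarith)
    have h2 := (summable_nat_add_iff 1).mpr h1
    refine h2.congr fun n => ?_
    push_cast
    ring_nf
  have := h.mul_left α
  refine this.congr fun n => ?_
  rw [mul_one_div]

lemma aux_tsum_le {α : ℝ} (h0 : 0 < α) :
    ∑' k : ℕ, α / ((k:ℝ) + 1) ^ (α + 1) ≤ 1 + α := by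
  have key : ∀ n : ℕ, ∑ i ∈ Finset.range n, α / ((i:ℝ) + 2) ^ (α + 1) ≤ 1 := by
    intro n
    have hf : AntitoneOn (fun x : ℝ => x ^ (-(α + 1))) (Icc 1 (1 + (n:ℝ))) := by
      intro x hx y hy hxy
      exact Real.rpow_le_rpow_of_nonpos (lt_of_lt_of_le one_pos hx.1) hxy (by linarith)
    have h2 := hf.sum_le_integral
    have h3 : (∫ x in (1:ℝ)..(1 + (n:ℝ)), x ^ (-(α + 1)))
        = ((1 + (n:ℝ)) ^ (-α) - 1) / (-α) := by
      rw [integral_rpow (Or.inr ⟨by intro h; linarith, by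
        intro h
        rw [Set.mem_uIcc] at h
        have : (0:ℝ) ≤ (n:ℝ) := Nat.cast_nonneg n
        rcases h with ⟨h', _⟩ | ⟨h', _⟩ <;> linarith⟩)]
      norm_num
    have h4 : ∑ i ∈ Finset.range n, α / ((i:ℝ) + 2) ^ (α + 1)
        = α * ∑ i ∈ Finset.range n, ((1:ℝ) + ((i + 1 : ℕ):ℝ)) ^ (-(α + 1)) := by
      rw [Finset.mul_sum]
      refine Finset.sum_congr rfl fun i _ => ?_
      push_cast
      rw [show (1:ℝ) + ((i:ℝ) + 1) = (i:ℝ) + 2 by ring,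
        Real.rpow_neg (by positivity)]
      rw [div_eq_mul_inv]
    have h5 : α * (((1 + (n:ℝ)) ^ (-α) - 1) / (-α)) ≤ 1 := by
      have hp : (0:ℝ) ≤ (1 + (n:ℝ)) ^ (-α) :=
        Real.rpow_nonneg (by positivity) _
      have : α * (((1 + (n:ℝ)) ^ (-α) - 1) / (-α)) = 1 - (1 + (n:ℝ)) ^ (-α) := by
        have hne : α ≠ 0 := h0.ne'
        rw [mul_div_assoc', div_eq_iff (neg_ne_zero.mpr hne)]
        ring
      rw [this]; linarith
    calc ∑ i ∈ Finset.range n, α / ((i:ℝ) + 2) ^ (α + 1)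
        = α * ∑ i ∈ Finset.range n, ((1:ℝ) + ((i + 1 : ℕ):ℝ)) ^ (-(α + 1)) := h4
      _ ≤ α * (((1 + (n:ℝ)) ^ (-α) - 1) / (-α)) := by
          rw [← h3]
          exact mul_le_mul_of_nonneg_left h2 h0.le
      _ ≤ 1 := h5
  have hT : ∑' k : ℕ, α / ((k:ℝ) + 2) ^ (α + 1) ≤ 1 :=
    Real.tsum_le_of_sum_range_le (fun n => by positivity) key
  rw [Summable.tsum_eq_zero_add (aux_summable h0)]
  have h0' : α / (((0:ℕ):ℝ) + 1) ^ (α + 1) = α := by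
    norm_num
  have hshift : ∑' k : ℕ, α / (((k + 1 : ℕ):ℝ) + 1) ^ (α + 1)
      = ∑' k : ℕ, α / ((k:ℝ) + 2) ^ (α + 1) := by
    refine tsum_congr fun k => ?_
    push_cast
    ring_nf
  rw [h0', hshift]
  linarith

/-- For every α ∈ (0,1), the constant
C(α) = -1/(1-α) + 1/2 - ∫_0^1 (u - 1/2) Σ_{k≥1} α/(u+k)^{α+1} du
is nonzero, and indeed strictly negative. -/
theorem stmt10 (α : ℝ) (h0 : 0 < α) (h1 : α < 1) :
    (-1 / (1 - α) + 1 / 2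
        - ∫ u in (0:ℝ)..1, (u - 1 / 2) * ∑' k : ℕ, α / (u + ((k:ℝ) + 1)) ^ (α + 1)) ≠ 0 ∧
    (-1 / (1 - α) + 1 / 2
        - ∫ u in (0:ℝ)..1, (u - 1 / 2) * ∑' k : ℕ, α / (u + ((k:ℝ) + 1)) ^ (α + 1)) < 0 := by
  have hbound : ∀ u ∈ Set.uIoc (0:ℝ) 1,
      ‖(u - 1 / 2) * ∑' k : ℕ, α / (u + ((k:ℝ) + 1)) ^ (α + 1)‖ ≤ (1 + α) / 2 := by
    intro u hu
    rw [Set.uIoc_of_le (by norm_num : (0:ℝ) ≤ 1)] at hu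
    have hu0 : 0 < u := hu.1
    have hu1 : u ≤ 1 := hu.2
    have hterm : ∀ k : ℕ,
        α / (u + ((k:ℝ) + 1)) ^ (α + 1) ≤ α / (((k:ℝ) + 1)) ^ (α + 1) := by
      intro k
      have hb : ((k:ℝ) + 1) ^ (α + 1) ≤ (u + ((k:ℝ) + 1)) ^ (α + 1) :=
        Real.rpow_le_rpow (by positivity) (by linarith) (by linarith)
      gcongr
    have hsum_u : Summable (fun k : ℕ => α / (u + ((k:ℝ) + 1)) ^ (α + 1)) :=
      Summable.of_nonneg_of_le (fun k => by positivity) hterm (aux_summable h0)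
    have hg0 : 0 ≤ ∑' k : ℕ, α / (u + ((k:ℝ) + 1)) ^ (α + 1) :=
      tsum_nonneg fun k => by positivity
    have hgle : ∑' k : ℕ, α / (u + ((k:ℝ) + 1)) ^ (α + 1)
        ≤ ∑' k : ℕ, α / (((k:ℝ) + 1)) ^ (α + 1) :=
      Summable.tsum_le_tsum hterm hsum_u (aux_summable h0)
    have hgle' : ∑' k : ℕ, α / (u + ((k:ℝ) + 1)) ^ (α + 1) ≤ 1 + α :=
      hgle.trans (aux_tsum_le h0)
    have habs : |u - 1 / 2| ≤ 1 / 2 := abs_le.mpr ⟨by linarith, by linarith⟩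
    rw [norm_mul, Real.norm_eq_abs, Real.norm_eq_abs, abs_of_nonneg hg0]
    calc |u - 1 / 2| * (∑' k : ℕ, α / (u + ((k:ℝ) + 1)) ^ (α + 1))
        ≤ (1 / 2) * (1 + α) := by
          apply mul_le_mul habs hgle' hg0 (by norm_num)
      _ = (1 + α) / 2 := by ring
  have hI := intervalIntegral.norm_integral_le_of_norm_le_const hbound
  rw [Real.norm_eq_abs] at hI
  have hI' : |∫ u in (0:ℝ)..1, (u - 1 / 2) * ∑' k : ℕ, α / (u + ((k:ℝ) + 1)) ^ (α + 1)|
      ≤ (1 + α) / 2 := by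
    calc |∫ u in (0:ℝ)..1, (u - 1 / 2) * ∑' k : ℕ, α / (u + ((k:ℝ) + 1)) ^ (α + 1)|
        ≤ (1 + α) / 2 * |1 - 0| := hI
      _ = (1 + α) / 2 := by norm_num
  have hIlb : -((1 + α) / 2)
      ≤ ∫ u in (0:ℝ)..1, (u - 1 / 2) * ∑' k : ℕ, α / (u + ((k:ℝ) + 1)) ^ (α + 1) :=
    (abs_le.mp hI').1
  have hlt : (-1 / (1 - α) + 1 / 2
      - ∫ u in (0:ℝ)..1, (u - 1 / 2) * ∑' k : ℕ, α / (u + ((k:ℝ) + 1)) ^ (α + 1)) < 0 := by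
    have hα : 0 < 1 - α := by linarith
    have h2 : -1 / (1 - α) + 1 / 2 + (1 + α) / 2 < 0 := by
      have ht : (1 / (1 - α)) * (1 - α) = 1 := div_mul_cancel₀ 1 hα.ne'
      have hdiv : -1 / (1 - α) = -(1 / (1 - α)) := by ring
      rw [hdiv]
      nlinarith [ht, mul_pos h0 h0]
    linarith
  exact ⟨ne_of_lt hlt, hlt⟩
end

section
/- For every α ∈ (0,1) there exists a constant C > 0 such that for all N ≥ 1 and all i, j ∈ Λ_N with i ≠ j, the integral over Δ_j = [x_j, x_{j+1}) of |d(x_i, x_j)^{-α} − d(x_i, y)^{-α}| dy is at most C · N^{α−1} · |i − j|_N^{-(α+1)}, where |i−j|_N denotes the circular distance min(|i−j|, 2N−|i−j|). -/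
open Set intervalIntegral

lemma circDist (u v : ℝ) :
    dist ((u : ℝ) : UnitAddCircle) ((v : ℝ) : UnitAddCircle)
      = min (Int.fract (u - v)) (1 - Int.fract (u - v)) := by
  rw [dist_eq_norm]
  have h : ((u : ℝ) : UnitAddCircle) - ((v : ℝ) : UnitAddCircle)
      = ((u - v : ℝ) : UnitAddCircle) := by norm_cast
  rw [h, UnitAddCircle.norm_eq, abs_sub_round_eq_min]

lemma circDist_of_nonneg {u v : ℝ} (h0 : 0 ≤ u - v) (h1 : u - v ≤ 1) :
    dist ((u : ℝ) : UnitAddCircle) ((v : ℝ) : UnitAddCircle)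
      = min (u - v) (1 - (u - v)) := by
  rw [circDist]
  rcases eq_or_lt_of_le h1 with h | h
  · rw [h]; norm_num
  · rw [Int.fract_eq_self.2 ⟨h0, h⟩]

lemma alg1 (α : ℝ) {x K : ℝ} (hx : 0 < x) (hK : 0 < K) :
    (K/x) ^ (-α-1) = K ^ (-(α+1)) * (x ^ (α+1)) := by
  rw [show (-α-1 : ℝ) = -(α+1) by ring, Real.rpow_neg (div_nonneg hK.le hx.le),
    Real.div_rpow hK.le hx.le, inv_div, div_eq_mul_inv, ← Real.rpow_neg hK.le, mul_comm]

lemma alg2 (α : ℝ) {x : ℝ} (hx : 0 < x) :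
    (4*x) ^ (α+1) * ((1/(2*x)) * (1/(2*x))) = 4 ^ α * x ^ (α-1) := by
  have h1 : (4*x) ^ (α+1) = 4^(α+1) * x^(α+1) :=
    Real.mul_rpow (by norm_num) hx.le
  have h2 : (4:ℝ)^(α+1) = 4^α * 4 := by
    rw [Real.rpow_add (by norm_num) α 1, Real.rpow_one]
  have h3 : x^(α+1) = x^(α-1) * x * x := by
    rw [show (α+1:ℝ) = (α-1) + 1 + 1 by ring, Real.rpow_add hx, Real.rpow_add hx,
      Real.rpow_one]
  rw [h1, h2, h3, div_mul_div_comm, one_mul, mul_one_div, div_eq_iff (by positivity)]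
  ring

lemma alg3 {x a b q : ℝ} (hx : x ≠ 0) (h : a - b = x*q) : a/x = b/x + q := by
  field_simp
  linarith

lemma rpow_lip {α m a b : ℝ} (h0 : 0 < α) (hm : 0 < m) (ha : m ≤ a) (hb : m ≤ b) :
    |a ^ (-α) - b ^ (-α)| ≤ α * m ^ (-α - 1) * |a - b| := by
  have hderiv : ∀ x ∈ Set.Ici m,
      HasDerivWithinAt (fun x : ℝ => x ^ (-α)) (-α * x ^ (-α - 1)) (Set.Ici m) x := by
    intro x hx
    exact (Real.hasDerivAt_rpow_const
      (Or.inl (ne_of_gt (lt_of_lt_of_le hm hx)))).hasDerivWithinAt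
  have hbound : ∀ x ∈ Set.Ici m, ‖-α * x ^ (-α - 1)‖ ≤ α * m ^ (-α - 1) := by
    intro x hx
    rw [norm_mul, Real.norm_eq_abs, Real.norm_eq_abs, abs_neg, abs_of_pos h0,
      abs_of_nonneg (Real.rpow_nonneg (le_trans hm.le hx) _)]
    exact mul_le_mul_of_nonneg_left
      (Real.rpow_le_rpow_of_nonpos hm hx (by linarith)) h0.le
  have h := (convex_Ici m).norm_image_sub_le_of_norm_hasDerivWithin_le hderiv hbound hb ha
  simpa [Real.norm_eq_abs] using h

set_option maxHeartbeats 2000000 in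
/-- For α ∈ (0,1) there is C > 0 such that for all N ≥ 1 and i ≠ j in Λ_N,
∫_{Δ_j} |d(x_i,x_j)^{-α} - d(x_i,y)^{-α}| dy ≤ C N^{α-1} |i-j|_N^{-(α+1)},
where Δ_j = [x_j, x_{j+1}) and |i-j|_N = min(|i-j|, 2N-|i-j|). -/
theorem stmt11 (α : ℝ) (h0 : 0 < α) (h1 : α < 1) :
    ∃ C > (0:ℝ), ∀ N : ℕ, 1 ≤ N →
      ∀ i ∈ Finset.Ico (-(N:ℤ)) (N:ℤ), ∀ j ∈ Finset.Ico (-(N:ℤ)) (N:ℤ), i ≠ j →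
        (∫ y in ((j:ℝ) / (2 * N))..(((j:ℝ) + 1) / (2 * N)),
            |dist (latticePt N i) (latticePt N j) ^ (-α)
              - dist (latticePt N i) ((y : ℝ) : UnitAddCircle) ^ (-α)|)
          ≤ C * (N:ℝ) ^ (α - 1)
              * (min |(i:ℝ) - (j:ℝ)| (2 * (N:ℝ) - |(i:ℝ) - (j:ℝ)|)) ^ (-(α + 1)) := by
  have h1a : (0:ℝ) < 1 - α := by linarith
  have hC4 : (0:ℝ) ≤ (4:ℝ)^α * α := by positivity
  have hCi : (0:ℝ) < (1-α)⁻¹ := inv_pos.2 h1a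
  refine ⟨(4:ℝ)^α * α + α + 1 + (1-α)⁻¹, by linarith, ?_⟩
  intro N hN i hi j hj hij
  rw [Finset.mem_Ico] at hi hj
  obtain ⟨hi1, hi2⟩ := hi
  obtain ⟨hj1, hj2⟩ := hj
  set n : ℝ := (N:ℝ) with hn
  have hn1 : (1:ℝ) ≤ n := by rw [hn]; exact_mod_cast hN
  have hn0 : (0:ℝ) < n := by linarith
  have hs0 : (0:ℝ) < 1/(2*n) := by apply div_pos one_pos; linarith
  have hs2 : 1/(2*n) ≤ 1/2 := by
    rw [div_le_div_iff₀ (by linarith) (by norm_num)]; linarith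
  set L : ℝ := (j:ℝ)/(2*n) with hL
  set R : ℝ := ((j:ℝ)+1)/(2*n) with hR
  have hRL : R - L = 1/(2*n) := by rw [hR, hL, div_sub_div_same]; norm_num
  have hLR : L ≤ R := by linarith
  have habsRL : |R - L| = 1/(2*n) := by rw [hRL]; exact abs_of_pos hs0
  -- integer bookkeeping
  have hd0 : i - j ≠ 0 := sub_ne_zero.2 hij
  have habs : |i - j| = i - j ∨ |i - j| = -(i - j) := abs_choice _
  set k : ℤ := min |i - j| (2*(N:ℤ) - |i - j|) with hk
  have hk1 : 1 ≤ k := by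
    rw [hk]
    refine le_min (Int.one_le_abs hd0) ?_
    rcases habs with h|h <;> rw [h] <;> omega
  have hkN : k ≤ (N:ℤ) := by
    rcases le_total |i - j| (2*(N:ℤ) - |i - j|) with hle | hle
    · rw [hk, min_eq_left hle]
      rcases habs with h|h <;> rw [h] at hle ⊢ <;> omega
    · rw [hk, min_eq_right hle]
      rcases habs with h|h <;> rw [h] <;> omega
  set K : ℝ := ((k:ℤ):ℝ) with hK
  have hK1 : (1:ℝ) ≤ K := by rw [hK]; exact_mod_cast hk1
  have hK0 : (0:ℝ) < K := by linarith
  have hKn : K ≤ n := by rw [hK, hn]; exact_mod_cast hkN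
  have hmin : min |(i:ℝ) - (j:ℝ)| (2*n - |(i:ℝ) - (j:ℝ)|) = K := by
    rw [hK, hk, hn]; push_cast; ring_nf
  -- lattice points as coercions
  have hxi0 : latticePt N i = (((i:ℝ)/(2*n) : ℝ) : UnitAddCircle) := by rw [hn]; rfl
  have hxj0 : latticePt N j = ((L : ℝ) : UnitAddCircle) := by rw [hL, hn]; rfl
  -- bounds on |i-j| as real
  have hb1 : ((|i - j| : ℤ):ℝ) ≤ 2*n - 1 := by
    rw [hn]
    exact_mod_cast (by rcases habs with h|h <;> rw [h] <;> omega : |i - j| ≤ 2*(N:ℤ) - 1)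
  have hb2 : (1:ℝ) ≤ ((|i - j| : ℤ):ℝ) := by exact_mod_cast Int.one_le_abs hd0
  have hKmin : K = min ((|i - j| : ℤ):ℝ) (2*n - ((|i - j| : ℤ):ℝ)) := by
    rw [hK, hk, hn]; push_cast; ring_nf
  -- distance between lattice points
  have hdij : dist (latticePt N i) (latticePt N j) = K/(2*n) := by
    rw [hxi0, hxj0, hL]
    rcases lt_or_gt_of_ne hd0 with hlt | hgt
    · rw [dist_comm]
      have habs' : ((|i - j| : ℤ):ℝ) = (j:ℝ) - (i:ℝ) := by
        rw [abs_of_neg hlt]; push_cast; ring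
      have hsub : (j:ℝ)/(2*n) - (i:ℝ)/(2*n) = ((|i - j| : ℤ):ℝ)/(2*n) := by
        rw [habs']; ring
      rw [circDist_of_nonneg
        (by rw [hsub]; exact div_nonneg (by linarith) (by linarith))
        (by rw [hsub, div_le_one (by linarith)]; linarith), hsub,
        show 1 - ((|i - j| : ℤ):ℝ)/(2*n) = (2*n - ((|i - j| : ℤ):ℝ))/(2*n) by
          rw [sub_div, div_self (ne_of_gt (by linarith : (0:ℝ) < 2*n))],
        min_div_div_right (by linarith : (0:ℝ) ≤ 2*n), hKmin]
    · have habs' : ((|i - j| : ℤ):ℝ) = (i:ℝ) - (j:ℝ) := by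
        rw [abs_of_pos hgt]; push_cast; ring
      have hsub : (i:ℝ)/(2*n) - (j:ℝ)/(2*n) = ((|i - j| : ℤ):ℝ)/(2*n) := by
        rw [habs']; ring
      rw [circDist_of_nonneg
        (by rw [hsub]; exact div_nonneg (by linarith) (by linarith))
        (by rw [hsub, div_le_one (by linarith)]; linarith), hsub,
        show 1 - ((|i - j| : ℤ):ℝ)/(2*n) = (2*n - ((|i - j| : ℤ):ℝ))/(2*n) by
          rw [sub_div, div_self (ne_of_gt (by linarith : (0:ℝ) < 2*n))],
        min_div_div_right (by linarith : (0:ℝ) ≤ 2*n), hKmin]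
  -- distance from y to x_j is small
  have hyj : ∀ y ∈ Set.Ioc L R,
      dist ((y : ℝ) : UnitAddCircle) (latticePt N j) ≤ 1/(2*n) := by
    intro y hy
    rw [hxj0, circDist_of_nonneg (by linarith [hy.1.le] : 0 ≤ y - L)
      (by linarith [hy.2, hRL, hs2] : y - L ≤ 1)]
    exact le_trans (min_le_left _ _) (by linarith [hy.2, hRL])
  -- triangle inequality bound
  have htri : ∀ y ∈ Set.Ioc L R,
      |K/(2*n) - dist (latticePt N i) ((y : ℝ) : UnitAddCircle)| ≤ 1/(2*n) := by
    intro y hy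
    have h := abs_dist_sub_le (latticePt N j) (((y:ℝ)) : UnitAddCircle) (latticePt N i)
    rw [dist_comm (latticePt N j) (latticePt N i),
      dist_comm (((y:ℝ)) : UnitAddCircle) (latticePt N i), hdij] at h
    exact le_trans h (by rw [dist_comm]; exact hyj y hy)
  rw [hmin, hdij]
  by_cases hk2 : 2 ≤ k
  · -- k ≥ 2 : Lipschitz bound with m = (K-1)/(2n)
    have hK2 : (2:ℝ) ≤ K := by rw [hK]; exact_mod_cast hk2
    have hm0 : (0:ℝ) < (K-1)/(2*n) := div_pos (by linarith) (by linarith)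
    have hbd : ∀ y ∈ Set.uIoc L R,
        ‖|(K/(2*n)) ^ (-α) - dist (latticePt N i) ((y : ℝ) : UnitAddCircle) ^ (-α)|‖
          ≤ α * ((K-1)/(2*n)) ^ (-α-1) * (1/(2*n)) := by
      rw [Set.uIoc_of_le hLR]
      intro y hy
      have htr := htri y hy
      have hblow : (K-1)/(2*n) ≤ dist (latticePt N i) ((y : ℝ) : UnitAddCircle) := by
        have h' := (abs_le.1 htr).2
        have he : (K-1)/(2*n) = K/(2*n) - 1/(2*n) := by ring
        rw [he]; linarith
      have halow : (K-1)/(2*n) ≤ K/(2*n) :=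
        (div_le_div_iff_of_pos_right (by linarith : (0:ℝ) < 2*n)).2 (by linarith)
      rw [Real.norm_eq_abs, abs_abs]
      refine le_trans (rpow_lip h0 hm0 halow hblow) ?_
      exact mul_le_mul_of_nonneg_left htr
        (mul_nonneg h0.le (Real.rpow_nonneg hm0.le _))
    have hint := intervalIntegral.norm_integral_le_of_norm_le_const hbd
    rw [Real.norm_eq_abs, habsRL] at hint
    refine le_trans (le_trans (le_abs_self _) hint) ?_
    -- arithmetic
    have hq : K/(4*n) ≤ (K-1)/(2*n) := by
      rw [div_le_div_iff₀ (by linarith) (by linarith)]; nlinarith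
    have h2 : ((K-1)/(2*n)) ^ (-α-1) ≤ (K/(4*n)) ^ (-α-1) :=
      Real.rpow_le_rpow_of_nonpos (div_pos hK0 (by linarith)) hq (by linarith)
    have hp4n : (0:ℝ) < (4*n) ^ (α+1) := Real.rpow_pos_of_pos (by linarith) _
    have hpK : (0:ℝ) < K ^ (α+1) := Real.rpow_pos_of_pos hK0 _
    have h3 : (K/(4*n)) ^ (-α-1) = K ^ (-(α+1)) * ((4*n) ^ (α+1)) :=
      alg1 α (by linarith) hK0
    have h4 : (4*n) ^ (α+1) * ((1/(2*n)) * (1/(2*n))) = 4 ^ α * n ^ (α-1) :=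
      alg2 α hn0
    calc α * ((K-1)/(2*n)) ^ (-α-1) * (1/(2*n)) * (1/(2*n))
        ≤ α * (K/(4*n)) ^ (-α-1) * (1/(2*n)) * (1/(2*n)) := by
          have h2' := mul_le_mul_of_nonneg_left h2 h0.le
          have h2'' := mul_le_mul_of_nonneg_right h2' hs0.le
          exact mul_le_mul_of_nonneg_right h2'' hs0.le
      _ = (4:ℝ)^α * α * (n ^ (α-1) * K ^ (-(α+1))) := by
          rw [h3]
          calc α * (K ^ (-(α+1)) * (4*n) ^ (α+1)) * (1/(2*n)) * (1/(2*n))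
              = α * K ^ (-(α+1)) * ((4*n) ^ (α+1) * ((1/(2*n)) * (1/(2*n)))) := by ring
            _ = α * K ^ (-(α+1)) * (4 ^ α * n ^ (α-1)) := by rw [h4]
            _ = (4:ℝ)^α * α * (n ^ (α-1) * K ^ (-(α+1))) := by ring
      _ ≤ ((4:ℝ)^α * α + α + 1 + (1-α)⁻¹) * (n ^ (α-1) * K ^ (-(α+1))) := by
          have hnn : (0:ℝ) ≤ n ^ (α-1) * K ^ (-(α+1)) :=
            mul_nonneg (Real.rpow_nonneg hn0.le _) (Real.rpow_nonneg hK0.le _)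
          nlinarith [mul_nonneg h0.le hnn, hnn, hCi.le, mul_nonneg hCi.le hnn]
      _ = ((4:ℝ)^α * α + α + 1 + (1-α)⁻¹) * n ^ (α-1) * K ^ (-(α+1)) := by ring
  · -- k = 1
    have hk1' : k = 1 := by omega
    have hKeq : K = 1 := by rw [hK, hk1']; norm_num
    rw [hKeq, Real.one_rpow, mul_one]
    have hd4 : i - j = 1 ∨ i - j = -1 ∨ i - j = 2*(N:ℤ)-1 ∨ i - j = -(2*(N:ℤ)-1) := by
      rcases min_choice |i - j| (2*(N:ℤ) - |i - j|) with hmc | hmc <;>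
        rw [← hk, hk1'] at hmc <;>
        rcases habs with h|h <;> rw [h] at hmc <;> omega
    have hspA : (1/(2*n)) ^ (-α+1) = (2*n) ^ (α-1) := by
      rw [show (α-1:ℝ) = -(-α+1) by ring, one_div,
        Real.inv_rpow (by linarith : (0:ℝ) ≤ 2*n),
        Real.rpow_neg (by linarith : (0:ℝ) ≤ 2*n)]
    have hsp : (1/(2*n)) ^ (-α+1) ≤ n ^ (α-1) := by
      rw [hspA]
      exact Real.rpow_le_rpow_of_nonpos hn0 (by linarith) (by linarith)
    have hT0 : (0:ℝ) ≤ n ^ (α-1) := Real.rpow_nonneg hn0.le _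
    by_cases he : (2*(N:ℤ)) ∣ (i - j - 1)
    · -- singular case: x_i is the right endpoint of the arc
      obtain ⟨q, hq⟩ := he
      have hqR : (i:ℝ) - (j:ℝ) - 1 = 2*n*(q:ℝ) := by rw [hn]; exact_mod_cast hq
      have hxi : latticePt N i = ((R : ℝ) : UnitAddCircle) := by
        rw [hxi0, hR]
        have key : (i:ℝ)/(2*n) = ((j:ℝ)+1)/(2*n) + ((q:ℤ):ℝ) :=
          alg3 (ne_of_gt (by linarith : (0:ℝ) < 2*n)) (by linarith)
        rw [key, AddCircle.coe_add]
        have hz : ((((q:ℤ):ℝ)) : UnitAddCircle) = 0 := by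
          rw [AddCircle.coe_eq_zero_iff]
          exact ⟨q, by simp [zsmul_eq_mul]⟩
        rw [hz, add_zero]
      have hcongr : (∫ y in L..R,
            |(1/(2*n)) ^ (-α) - dist (latticePt N i) ((y : ℝ) : UnitAddCircle) ^ (-α)|)
          = ∫ y in L..R, |(1/(2*n)) ^ (-α) - (R - y) ^ (-α)| := by
        apply intervalIntegral.integral_congr
        intro y hy
        rw [Set.uIcc_of_le hLR] at hy
        have hdy : dist (latticePt N i) ((y : ℝ) : UnitAddCircle) = R - y := by
          rw [hxi, circDist_of_nonneg (by linarith [hy.2] : 0 ≤ R - y)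
            (by linarith [hy.1, hRL, hs2] : R - y ≤ 1)]
          exact min_eq_left (by linarith [hy.1, hRL, hs2])
        simp only [hdy]
      have hIg : IntervalIntegrable (fun y => (R - y) ^ (-α)) MeasureTheory.volume L R := by
        have h' : IntervalIntegrable (fun x : ℝ => x ^ (-α)) MeasureTheory.volume
            (R - L) (R - R) := intervalIntegrable_rpow' (by linarith)
        have h'' := h'.comp_sub_left R
        rw [show R - (R - L) = L by ring, show R - (R - R) = R by ring] at h''
        exact h''
      have hIf : IntervalIntegrable
          (fun y => |(1/(2*n)) ^ (-α) - (R - y) ^ (-α)|) MeasureTheory.volume L R :=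
        ((intervalIntegrable_const.sub hIg).abs)
      have hpt : ∀ y ∈ Set.Icc L R,
          |(1/(2*n)) ^ (-α) - (R - y) ^ (-α)| ≤ (1/(2*n)) ^ (-α) + (R - y) ^ (-α) := by
        intro y hy
        have hA : (0:ℝ) ≤ (1/(2*n)) ^ (-α) := Real.rpow_nonneg hs0.le _
        have hB : (0:ℝ) ≤ (R - y) ^ (-α) := Real.rpow_nonneg (by linarith [hy.2]) _
        calc |(1/(2*n)) ^ (-α) - (R - y) ^ (-α)|
            ≤ |(1/(2*n)) ^ (-α)| + |(R - y) ^ (-α)| := abs_sub _ _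
          _ = (1/(2*n)) ^ (-α) + (R - y) ^ (-α) := by
              rw [abs_of_nonneg hA, abs_of_nonneg hB]
      have hmono := intervalIntegral.integral_mono_on hLR hIf
        (intervalIntegrable_const.add hIg) hpt
      have hval : (∫ y in L..R, (R - y) ^ (-α)) = (1/(2*n)) ^ (-α+1) / (-α+1) := by
        rw [intervalIntegral.integral_comp_sub_left (fun x : ℝ => x ^ (-α)) R,
          show R - R = (0:ℝ) by ring, hRL,
          integral_rpow (Or.inl (by linarith : (-1:ℝ) < -α)),
          Real.zero_rpow (by linarith : (-α+1 : ℝ) ≠ 0)]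
        ring
      have hsplit : (∫ y in L..R, ((1/(2*n)) ^ (-α) + (R - y) ^ (-α)))
          = (1/(2*n)) ^ (-α) * (1/(2*n)) + (1/(2*n)) ^ (-α+1) / (-α+1) := by
        rw [intervalIntegral.integral_add intervalIntegrable_const hIg,
          intervalIntegral.integral_const, hval, smul_eq_mul, hRL]
        ring
      have hA' : (1/(2*n)) ^ (-α+1) = (1/(2*n)) ^ (-α) * (1/(2*n)) := by
        rw [Real.rpow_add hs0, Real.rpow_one]
      calc (∫ y in L..R,
            |(1/(2*n)) ^ (-α) - dist (latticePt N i) ((y : ℝ) : UnitAddCircle) ^ (-α)|)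
          = ∫ y in L..R, |(1/(2*n)) ^ (-α) - (R - y) ^ (-α)| := hcongr
        _ ≤ ∫ y in L..R, ((1/(2*n)) ^ (-α) + (R - y) ^ (-α)) := hmono
        _ = (1/(2*n)) ^ (-α) * (1/(2*n)) + (1/(2*n)) ^ (-α+1) / (-α+1) := hsplit
        _ ≤ ((4:ℝ)^α * α + α + 1 + (1-α)⁻¹) * n ^ (α-1) := by
            have hX0 : (0:ℝ) ≤ (1/(2*n)) ^ (-α+1) := Real.rpow_nonneg hs0.le _
            have hdiv : (1/(2*n)) ^ (-α+1) / (-α+1)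
                = (1/(2*n)) ^ (-α+1) * (1-α)⁻¹ := by
              rw [div_eq_mul_inv, show (-α+1:ℝ) = 1-α by ring]
            rw [← hA', hdiv]
            nlinarith [mul_le_mul_of_nonneg_right hsp hCi.le,
              mul_nonneg hC4 hT0, mul_nonneg h0.le hT0]
    · -- x_i is to the left of the arc, distance bounded below
      have hN2 : 2 ≤ N := by
        by_contra h'
        have hN1 : N = 1 := by omega
        apply he
        subst hN1
        rcases hd4 with h|h|h|h
        · exact ⟨0, by omega⟩
        · exact ⟨-1, by omega⟩
        · exact ⟨0, by omega⟩
        · exact ⟨-1, by omega⟩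
      have hn2 : (2:ℝ) ≤ n := by rw [hn]; exact_mod_cast hN2
      obtain ⟨q, hq⟩ : ∃ q : ℤ, i - j + 1 = 2*(N:ℤ)*q := by
        rcases hd4 with h|h|h|h
        · exact absurd ⟨0, by omega⟩ he
        · exact ⟨0, by omega⟩
        · exact ⟨1, by omega⟩
        · exact absurd ⟨-1, by omega⟩ he
      have hqR : (i:ℝ) - (j:ℝ) + 1 = 2*n*(q:ℝ) := by rw [hn]; exact_mod_cast hq
      set c : ℝ := ((j:ℝ)-1)/(2*n) with hc
      have hcL : c = L - 1/(2*n) := by rw [hc, hL]; ring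
      have hxi : latticePt N i = ((c : ℝ) : UnitAddCircle) := by
        rw [hxi0, hc]
        have key : (i:ℝ)/(2*n) = ((j:ℝ)-1)/(2*n) + ((q:ℤ):ℝ) :=
          alg3 (ne_of_gt (by linarith : (0:ℝ) < 2*n)) (by linarith)
        rw [key, AddCircle.coe_add]
        have hz : ((((q:ℤ):ℝ)) : UnitAddCircle) = 0 := by
          rw [AddCircle.coe_eq_zero_iff]
          exact ⟨q, by simp [zsmul_eq_mul]⟩
        rw [hz, add_zero]
      have h3s : 3*(1/(2*n)) ≤ 1 := by
        rw [mul_one_div, div_le_one (by linarith)]; linarith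
      have hbd : ∀ y ∈ Set.uIoc L R,
          ‖|(1/(2*n)) ^ (-α) - dist (latticePt N i) ((y : ℝ) : UnitAddCircle) ^ (-α)|‖
            ≤ α * (1/(2*n)) ^ (-α-1) * (1/(2*n)) := by
        rw [Set.uIoc_of_le hLR]
        intro y hy
        have hblow : 1/(2*n) ≤ dist (latticePt N i) ((y : ℝ) : UnitAddCircle) := by
          rw [hxi, dist_comm, circDist_of_nonneg
            (by linarith [hy.1.le, hcL] : 0 ≤ y - c)
            (by linarith [hy.2, hRL, hcL, h3s] : y - c ≤ 1)]
          apply le_min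
          · linarith [hy.1, hcL]
          · linarith [hy.2, hRL, hcL, h3s]
        have htr := htri y hy
        rw [hKeq] at htr
        rw [Real.norm_eq_abs, abs_abs]
        refine le_trans (rpow_lip h0 hs0 (le_refl _) hblow) ?_
        exact mul_le_mul_of_nonneg_left htr
          (mul_nonneg h0.le (Real.rpow_nonneg hs0.le _))
      have hint := intervalIntegral.norm_integral_le_of_norm_le_const hbd
      rw [Real.norm_eq_abs, habsRL] at hint
      refine le_trans (le_trans (le_abs_self _) hint) ?_
      have hX : (1/(2*n)) ^ (-α+1) = (1/(2*n)) ^ (-α-1) * (1/(2*n)) * (1/(2*n)) := by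
        rw [show (-α+1:ℝ) = (-α-1) + 1 + 1 by ring, Real.rpow_add hs0,
          Real.rpow_add hs0, Real.rpow_one]
      calc α * (1/(2*n)) ^ (-α-1) * (1/(2*n)) * (1/(2*n))
          = α * (1/(2*n)) ^ (-α+1) := by rw [hX]; ring
        _ ≤ α * n ^ (α-1) := mul_le_mul_of_nonneg_left hsp h0.le
        _ ≤ ((4:ℝ)^α * α + α + 1 + (1-α)⁻¹) * n ^ (α-1) := by
            nlinarith [mul_nonneg hC4 hT0, hT0, hCi.le, mul_nonneg hCi.le hT0]
end
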